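/- Let τ : M → N be a surjective weak map between matroids of equal rank r, and suppose for all k that w_k(M) = w_k(N). If additionally σ = τ is a strong map, then τ^# is a lattice isomorphism; more generally, a surjective strong map between matroids of the same rank induces an isomorphism of their lattices of flats. -/
import Mathlib


open Finset

/-- A finite matroid on ground set `E`, presented by its rank function. -/
structure FinMatroid (E : Type) [DecidableEq E] [Fintype E] where
  rk : Finset E → ℕ
  rk_le_card : ∀ X, rk X ≤ X.card
  rk_mono : ∀ ⦃X Y : Finset E⦄, X ⊆ Y → rk X ≤ rk Y
  rk_submod : ∀ X Y, rk (X ∪ Y) + rk (X ∩ Y) ≤ rk X + rk Y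

namespace FinMatroid

variable {E α β γ : Type} [DecidableEq E] [Fintype E]

/-- A set is independent iff its rank equals its cardinality. -/
def Indep (M : FinMatroid E) (X : Finset E) : Prop := M.rk X = X.card

/-- The closure of a set: all elements whose insertion does not raise the rank. -/
def closure (M : FinMatroid E) (X : Finset E) : Finset E :=
  univ.filter fun e => M.rk (insert e X) = M.rk X

/-- A flat is a closed set. -/
def IsFlat (M : FinMatroid E) (X : Finset E) : Prop := M.closure X = X

instance (M : FinMatroid E) (X : Finset E) : Decidable (M.IsFlat X) :=
  decidable_of_iff (M.closure X = X) Iff.rfl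

/-- The rank of the matroid. -/
def rank (M : FinMatroid E) : ℕ := M.rk univ

/-- The image of a finite set under a map into `E(N) ∪ {o}`; the zero element `o`
is modelled by `none` and contributes nothing to the image. -/
def optImage [DecidableEq β] (τ : α → Option β) (X : Finset α) : Finset β :=
  X.biUnion fun a => (τ a).toFinset

variable [DecidableEq α] [Fintype α] [DecidableEq β] [Fintype β]

/-- `τ : E(M) ∪ o → E(N) ∪ o` (with `o ↦ o`) is a weak map iff the rank of the image of any
set is at most the rank of the set. -/
def IsWeakMap (M : FinMatroid α) (N : FinMatroid β) (τ : α → Option β) : Prop :=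
  ∀ X : Finset α, N.rk (optImage τ X) ≤ M.rk X

/-- `τ` is surjective if every (nonzero) element of `E(N)` is in the image. -/
def IsSurjMap (τ : α → Option β) : Prop := ∀ b : β, ∃ a : α, τ a = some b

/-- Preimage of `Y ∪ {o}` under `τ`, intersected with `E(M)`. -/
def optPreimage (τ : α → Option β) (Y : Finset β) : Finset α :=
  univ.filter fun a => ∀ b, τ a = some b → b ∈ Y

/-- A strong map: preimages of flats are flats. -/
def IsStrongMap (M : FinMatroid α) (N : FinMatroid β) (τ : α → Option β) : Prop :=
  ∀ Y : Finset β, N.IsFlat Y → M.IsFlat (optPreimage τ Y)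

/-- The induced map `τ^#` on flats, `X ↦ cl_N(τ(X))`. -/
def hmap (N : FinMatroid β) (τ : α → Option β) (X : Finset α) : Finset β :=
  N.closure (optImage τ X)

/-- The Möbius function `μ(0̂, X)` of the lattice of flats of `M`, where `0̂ = cl(∅)`. -/
def mu (M : FinMatroid E) (X : Finset E) : ℤ :=
  if X = M.closure ∅ then 1
  else - ∑ Y ∈ (X.powerset.filter fun Y => M.IsFlat Y ∧ Y ≠ X).attach, M.mu Y.1
termination_by X.card
decreasing_by
  have h := Y.2
  simp only [Finset.mem_filter, Finset.mem_powerset] at h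
  exact Finset.card_lt_card (h.1.ssubset_of_ne h.2.2)

/-- The `k`-th Whitney number of the first kind. -/
def whitney (M : FinMatroid E) (k : ℕ) : ℕ :=
  ∑ X ∈ univ.powerset.filter (fun X => M.IsFlat X ∧ M.rk X = k), (M.mu X).natAbs

end FinMatroid

namespace FinMatroid

section Aux

variable {E α β : Type} [DecidableEq E] [Fintype E]

lemma rk_empty (M : FinMatroid E) : M.rk ∅ = 0 :=
  Nat.le_zero.mp (by simpa using M.rk_le_card ∅)

lemma rk_insert_le (M : FinMatroid E) (X : Finset E) (e : E) :
    M.rk (insert e X) ≤ M.rk X + 1 := by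
  have h := M.rk_submod {e} X
  rw [← Finset.insert_eq] at h
  have h1 : M.rk {e} ≤ 1 := by simpa using M.rk_le_card {e}
  have h2 : M.rk ({e} ∩ X) ≥ 0 := Nat.zero_le _
  omega

lemma mem_closure {M : FinMatroid E} {X : Finset E} {e : E} :
    e ∈ M.closure X ↔ M.rk (insert e X) = M.rk X := by
  simp [closure]

lemma subset_closure (M : FinMatroid E) (X : Finset E) : X ⊆ M.closure X := by
  intro e he
  rw [mem_closure, Finset.insert_eq_self.mpr he]

lemma closure_mono_mem {M : FinMatroid E} {X Y : Finset E} {e : E}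
    (hXY : X ⊆ Y) (he : e ∈ M.closure X) : e ∈ M.closure Y := by
  rw [mem_closure] at he ⊢
  have h := M.rk_submod (insert e X) Y
  have hu : insert e X ∪ Y = insert e Y := by
    rw [Finset.insert_union, Finset.union_eq_right.mpr hXY]
  rw [hu] at h
  have hi : X ⊆ insert e X ∩ Y := Finset.subset_inter (Finset.subset_insert _ _) hXY
  have h2 := M.rk_mono hi
  have h3 := M.rk_mono (Finset.subset_insert e Y)
  omega

lemma rk_union_of_subset_closure (M : FinMatroid E) (X : Finset E) :
    ∀ S : Finset E, S ⊆ M.closure X → M.rk (X ∪ S) = M.rk X := by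
  intro S
  induction S using Finset.induction_on with
  | empty => intro _; rw [Finset.union_empty]
  | @insert a S ha ih =>
    intro hS
    have haX : a ∈ M.closure X := hS (Finset.mem_insert_self a S)
    have hS' : S ⊆ M.closure X := (Finset.subset_insert a S).trans hS
    have hXS : X ⊆ X ∪ S := Finset.subset_union_left
    have h2 : a ∈ M.closure (X ∪ S) := closure_mono_mem hXS haX
    rw [mem_closure] at h2
    rw [Finset.union_insert, h2, ih hS']

lemma rk_closure (M : FinMatroid E) (X : Finset E) : M.rk (M.closure X) = M.rk X := by
  have h := rk_union_of_subset_closure M X (M.closure X) subset_rfl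
  rwa [Finset.union_eq_right.mpr (M.subset_closure X)] at h

lemma closure_isFlat (M : FinMatroid E) (X : Finset E) : M.IsFlat (M.closure X) := by
  apply Finset.Subset.antisymm _ (M.subset_closure _)
  intro e he
  rw [mem_closure] at he ⊢
  rw [rk_closure] at he
  have h1 : M.rk (insert e X) ≤ M.rk (insert e (M.closure X)) :=
    M.rk_mono (Finset.insert_subset_insert e (M.subset_closure X))
  have h2 : M.rk X ≤ M.rk (insert e X) := M.rk_mono (Finset.subset_insert e X)
  omega

lemma closure_min {M : FinMatroid E} {A F : Finset E} (hAF : A ⊆ F) (hF : M.IsFlat F) :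
    M.closure A ⊆ F := by
  intro e he
  have := closure_mono_mem hAF he
  rwa [hF] at this

lemma closure_mono {M : FinMatroid E} {A B : Finset E} (h : A ⊆ B) :
    M.closure A ⊆ M.closure B :=
  closure_min (h.trans (M.subset_closure B)) (M.closure_isFlat B)

lemma flat_eq_of_subset_of_rk_le {M : FinMatroid E} {X P : Finset E}
    (hX : M.IsFlat X) (hXP : X ⊆ P) (hrk : M.rk P ≤ M.rk X) : P = X := by
  apply Finset.Subset.antisymm _ hXP
  intro e he
  have h1 : M.rk (insert e X) ≤ M.rk P := M.rk_mono (Finset.insert_subset he hXP)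
  have h2 : M.rk X ≤ M.rk (insert e X) := M.rk_mono (Finset.subset_insert e X)
  have : e ∈ M.closure X := mem_closure.mpr (by omega)
  rwa [hX] at this

variable [DecidableEq α] [Fintype α] [DecidableEq β] [Fintype β]

lemma mem_optImage {τ : α → Option β} {X : Finset α} {b : β} :
    b ∈ optImage τ X ↔ ∃ a ∈ X, τ a = some b := by
  simp [optImage, Option.mem_toFinset, Option.mem_def]

lemma optImage_mono {τ : α → Option β} {X Y : Finset α} (h : X ⊆ Y) :
    optImage τ X ⊆ optImage τ Y := by
  intro b hb
  rw [mem_optImage] at hb ⊢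
  obtain ⟨a, ha, hab⟩ := hb
  exact ⟨a, h ha, hab⟩

lemma mem_optPreimage {τ : α → Option β} {Y : Finset β} {a : α} :
    a ∈ optPreimage τ Y ↔ ∀ b, τ a = some b → b ∈ Y := by
  simp [optPreimage]

lemma optPreimage_mono {τ : α → Option β} {Y Y' : Finset β} (h : Y ⊆ Y') :
    optPreimage τ Y ⊆ optPreimage τ Y' := by
  intro a ha
  rw [mem_optPreimage] at ha ⊢
  exact fun b hb => h (ha b hb)

lemma optImage_insert (τ : α → Option β) (a : α) (X : Finset α) :
    optImage τ (insert a X) = (τ a).toFinset ∪ optImage τ X :=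
  Finset.biUnion_insert

lemma optImage_optPreimage {τ : α → Option β} (hs : IsSurjMap τ) (Y : Finset β) :
    optImage τ (optPreimage τ Y) = Y := by
  apply Finset.Subset.antisymm
  · intro b hb
    rw [mem_optImage] at hb
    obtain ⟨a, ha, hab⟩ := hb
    exact mem_optPreimage.mp ha b hab
  · intro b hb
    obtain ⟨a, ha⟩ := hs b
    rw [mem_optImage]
    refine ⟨a, mem_optPreimage.mpr fun b' hb' => ?_, ha⟩
    rw [ha] at hb'
    obtain rfl := Option.some_injective _ hb'
    exact hb

lemma optImage_univ {τ : α → Option β} (hs : IsSurjMap τ) :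
    optImage τ (univ : Finset α) = univ := by
  apply Finset.eq_univ_of_forall
  intro b
  obtain ⟨a, ha⟩ := hs b
  exact mem_optImage.mpr ⟨a, Finset.mem_univ a, ha⟩

lemma subset_optPreimage_hmap (M : FinMatroid α) (N : FinMatroid β) (τ : α → Option β)
    (X : Finset α) : X ⊆ optPreimage τ (hmap N τ X) := by
  intro a ha
  rw [mem_optPreimage]
  intro b hb
  exact N.subset_closure _ (mem_optImage.mpr ⟨a, ha, hb⟩)

/-- Key step: if adding `a` to `B` does not raise the `M`-rank, then the image ranks agree. -/
lemma rank_step (M : FinMatroid α) (N : FinMatroid β) (τ : α → Option β)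
    (hst : IsStrongMap M N τ) (a : α) (B : Finset α) :
    N.rk (optImage τ (insert a B)) + M.rk B ≤ N.rk (optImage τ B) + M.rk (insert a B) := by
  by_cases h : M.rk (insert a B) = M.rk B
  · -- `a ∈ cl B`, so the image of `a` is in the closure of the image of `B`
    have hF : N.IsFlat (N.closure (optImage τ B)) := N.closure_isFlat _
    have hP : M.IsFlat (optPreimage τ (N.closure (optImage τ B))) := hst _ hF
    have hBP : B ⊆ optPreimage τ (N.closure (optImage τ B)) := by
      intro x hx
      rw [mem_optPreimage]
      intro b hb
      exact N.subset_closure _ (mem_optImage.mpr ⟨x, hx, hb⟩)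
    have haP : a ∈ optPreimage τ (N.closure (optImage τ B)) := by
      have haB : a ∈ M.closure B := mem_closure.mpr h
      exact closure_min hBP hP haB
    rw [mem_optPreimage] at haP
    have key : N.rk (optImage τ (insert a B)) = N.rk (optImage τ B) := by
      rw [optImage_insert]
      cases hτ : τ a with
      | none => simp
      | some b =>
        have hb : b ∈ N.closure (optImage τ B) := haP b hτ
        rw [mem_closure] at hb
        have : (some b).toFinset ∪ optImage τ B = insert b (optImage τ B) := by
          ext x; simp [Option.toFinset]
        rw [this, hb]
    omega
  · have h1 : M.rk B ≤ M.rk (insert a B) := M.rk_mono (Finset.subset_insert a B)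
    have h2 : N.rk (optImage τ (insert a B)) ≤ N.rk (optImage τ B) + 1 := by
      rw [optImage_insert]
      cases hτ : τ a with
      | none => simp
      | some b =>
        have : (some b).toFinset ∪ optImage τ B = insert b (optImage τ B) := by
          ext x; simp [Option.toFinset]
        rw [this]
        exact N.rk_insert_le _ b
    omega

lemma rank_diff (M : FinMatroid α) (N : FinMatroid β) (τ : α → Option β)
    (hst : IsStrongMap M N τ) (S : Finset α) :
    ∀ A : Finset α,
      N.rk (optImage τ (A ∪ S)) + M.rk A ≤ N.rk (optImage τ A) + M.rk (A ∪ S) := by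
  induction S using Finset.induction_on with
  | empty => intro A; rw [Finset.union_empty]
  | @insert a S ha ih =>
    intro A
    have hAB : A ∪ insert a S = insert a (A ∪ S) := Finset.union_insert a A S
    have h1 := ih A
    have h2 := rank_step M N τ hst a (A ∪ S)
    rw [hAB]
    omega

/-- For any `Y`, the rank of its preimage is at most its rank, given equality of ranks. -/
lemma rk_optPreimage_le (M : FinMatroid α) (N : FinMatroid β) (τ : α → Option β)
    (hst : IsStrongMap M N τ) (hs : IsSurjMap τ)
    (hr : N.rank = M.rank) (Y : Finset β) :
    M.rk (optPreimage τ Y) ≤ N.rk Y := by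
  have h := rank_diff M N τ hst univ (optPreimage τ Y)
  rw [Finset.union_eq_right.mpr (Finset.subset_univ _), optImage_univ hs, optImage_optPreimage hs] at h
  have hM : M.rk univ = M.rank := rfl
  have hN : N.rk univ = N.rank := rfl
  have hmono : M.rk (optPreimage τ Y) ≤ M.rk univ := M.rk_mono (Finset.subset_univ _)
  omega

/-- The crucial identity: for a flat `X` of `M`, `τ⁻¹(τ^# X) = X`. -/
lemma optPreimage_hmap_eq (M : FinMatroid α) (N : FinMatroid β) (τ : α → Option β)
    (hw : IsWeakMap M N τ) (hst : IsStrongMap M N τ) (hs : IsSurjMap τ)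
    (hr : N.rank = M.rank) {X : Finset α} (hX : M.IsFlat X) :
    optPreimage τ (hmap N τ X) = X := by
  have hXP : X ⊆ optPreimage τ (hmap N τ X) := subset_optPreimage_hmap M N τ X
  have hrk : M.rk (optPreimage τ (hmap N τ X)) ≤ M.rk X := by
    calc M.rk (optPreimage τ (hmap N τ X)) ≤ N.rk (hmap N τ X) :=
          rk_optPreimage_le M N τ hst hs hr _
      _ = N.rk (optImage τ X) := N.rk_closure _
      _ ≤ M.rk X := hw X
  exact flat_eq_of_subset_of_rk_le hX hXP hrk

end Aux

end FinMatroid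

/-- if `τ : M → N` is a surjective weak map between matroids of equal
rank `r` with `w_k(M) = w_k(N)` for all `k`, and `τ` is moreover a strong map, then
`τ^#` is a lattice isomorphism between the lattices of flats (as for any surjective
strong map between matroids of the same rank). -/
theorem stmt_18 {α β : Type} [DecidableEq α] [Fintype α] [DecidableEq β] [Fintype β]
    (M : FinMatroid α) (N : FinMatroid β) (τ : α → Option β)
    (hw : FinMatroid.IsWeakMap M N τ) (hs : FinMatroid.IsSurjMap τ)
    (r : ℕ) (hrM : M.rank = r) (hrN : N.rank = r)
    (hwh : ∀ k : ℕ, M.whitney k = N.whitney k)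
    (hst : FinMatroid.IsStrongMap M N τ) :
    (∀ X X' : Finset α, M.IsFlat X → M.IsFlat X' →
        (FinMatroid.hmap N τ X ⊆ FinMatroid.hmap N τ X' ↔ X ⊆ X')) ∧
    (∀ Y : Finset β, N.IsFlat Y → ∃ X : Finset α, M.IsFlat X ∧ FinMatroid.hmap N τ X = Y) := by
  have hr : N.rank = M.rank := by rw [hrM, hrN]
  constructor
  · intro X X' hX hX'
    constructor
    · intro h
      calc X ⊆ FinMatroid.optPreimage τ (FinMatroid.hmap N τ X) :=
            FinMatroid.subset_optPreimage_hmap M N τ X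
        _ ⊆ FinMatroid.optPreimage τ (FinMatroid.hmap N τ X') :=
            FinMatroid.optPreimage_mono h
        _ = X' := FinMatroid.optPreimage_hmap_eq M N τ hw hst hs hr hX'
    · intro h
      exact FinMatroid.closure_mono (FinMatroid.optImage_mono h)
  · intro Y hY
    refine ⟨FinMatroid.optPreimage τ Y, hst Y hY, ?_⟩
    unfold FinMatroid.hmap
    rw [FinMatroid.optImage_optPreimage hs]
    exact hY
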